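/- Let p ≥ 3 be a prime and let G_e = ⟨a, b, c⟩ be the EGS-group defined by a non-zero vector e = (e_1,…,e_{p−1}) ∈ (Z/pZ)^{p−1}. Then G_e is a contracting group with nucleus N_e = {1} ∪ {a^i : 1 ≤ i ≤ p−1} ∪ {b^j : 1 ≤ j ≤ p−1} ∪ {c^k : 1 ≤ k ≤ p−1}, and |N_e| = 3p − 2. -/

import Mathlib

/-!
Let `M = ⟨a⟩ ∪ ⟨b⟩ ∪ ⟨c⟩` (`genPowers`). The generators `b, c` fix the first level and each of
their first-level sections is the generator itself or a power of `a`, so `M` is closed under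
sections, and `a, b, c` have order `p`. A first-level section of a product of two elements of `M`
lies in `⟨a⟩ M ⟨a⟩`: the only products not already in `⟨a⟩ M ⟨a⟩` are `b^i c^j` and `c^i b^j`, and
at every vertex `x` one of `b|_x, c|_x` (namely `c|_{p-1}`, resp. `b|_x` for `x ≠ p-1`) is a power
of `a`. Sections of `⟨a⟩ M ⟨a⟩` lie in `M` again, so `M` is a quasinucleus at level `2`.

Conversely `b^i` and `c^i` are their own sections along the rays `(p-1)(p-1)…` and `00…`, and a
section `b|_x = a^{e_n}` with `e_n ≠ 0` generates `⟨a⟩` because `p` is prime; so every element of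
`M` is a section at every level `k ≥ 1` of an element of `M`, and any quasinucleus contains `M`.
Finally `⟨a⟩, ⟨b⟩, ⟨c⟩` meet pairwise only in `1` (compare sections at `p-1` and `0`), which gives
`|M| = 1 + 3(p - 1)`.
-/

/-- An automorphism of the rooted `p`-ary tree, encoded by its portrait:
at every vertex (a finite word over `Fin p`) it records the permutation of the
`p` subtrees hanging at that vertex. -/
@[ext]
structure TreeAut (p : ℕ) where
  perm : List (Fin p) → Equiv.Perm (Fin p)

namespace TreeAut

variable {p : ℕ}

/-- The section of a tree automorphism at a first-level vertex `x`. -/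
def sect (g : TreeAut p) (x : Fin p) : TreeAut p := ⟨fun v => g.perm (x :: v)⟩

/-- The section of a tree automorphism at an arbitrary vertex. -/
def sectV (g : TreeAut p) : List (Fin p) → TreeAut p
  | [] => g
  | x :: v => (g.sect x).sectV v

/-- The action of a tree automorphism on vertices (finite words over `Fin p`). -/
def act (g : TreeAut p) : List (Fin p) → List (Fin p)
  | [] => []
  | x :: v => g.perm [] x :: (g.sect x).act v

/-- The inverse of the action of a tree automorphism on vertices. -/
def actInv (g : TreeAut p) : List (Fin p) → List (Fin p)
  | [] => []
  | x :: v => (g.perm []).symm x :: (g.sect ((g.perm []).symm x)).actInv v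

instance : One (TreeAut p) := ⟨⟨fun _ => 1⟩⟩

/-- Composition convention as in the paper: `g * h` acts by `g` first, then `h`. -/
instance : Mul (TreeAut p) := ⟨fun g h => ⟨fun v => (g.perm v).trans (h.perm (g.act v))⟩⟩

instance : Inv (TreeAut p) := ⟨fun g => ⟨fun v => (g.perm (g.actInv v)).symm⟩⟩

theorem perm_one (v : List (Fin p)) : (1 : TreeAut p).perm v = 1 := rfl

theorem perm_mul (g h : TreeAut p) (v : List (Fin p)) :
    (g * h).perm v = (g.perm v).trans (h.perm (g.act v)) := rfl

theorem perm_inv (g : TreeAut p) (v : List (Fin p)) :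
    (g⁻¹).perm v = (g.perm (g.actInv v)).symm := rfl

theorem sect_one (x : Fin p) : (1 : TreeAut p).sect x = 1 := rfl

theorem sect_mul (g h : TreeAut p) (x : Fin p) :
    (g * h).sect x = g.sect x * h.sect (g.perm [] x) := rfl

theorem sect_inv (g : TreeAut p) (x : Fin p) :
    (g⁻¹).sect x = (g.sect ((g.perm []).symm x))⁻¹ := rfl

theorem act_one : ∀ v : List (Fin p), (1 : TreeAut p).act v = v
  | [] => rfl
  | x :: v => by
    show (1 : Equiv.Perm (Fin p)) x :: ((1 : TreeAut p).sect x).act v = x :: v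
    rw [sect_one, act_one v]
    rfl

theorem act_mul : ∀ (v : List (Fin p)) (g h : TreeAut p), (g * h).act v = h.act (g.act v)
  | [], _, _ => rfl
  | x :: v, g, h => by
    show (g * h).perm [] x :: ((g * h).sect x).act v = _
    rw [sect_mul, act_mul v]
    rfl

theorem act_inv : ∀ (v : List (Fin p)) (g : TreeAut p), (g⁻¹).act v = g.actInv v
  | [], _ => rfl
  | x :: v, g => by
    show (g⁻¹).perm [] x :: ((g⁻¹).sect x).act v = _
    rw [sect_inv, act_inv v]
    rfl

instance : Group (TreeAut p) where
  mul_assoc g h k := by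
    ext v y
    simp [perm_mul, act_mul, Equiv.trans_apply]
  one_mul g := by
    ext v y
    simp [perm_mul, perm_one, act_one]
  mul_one g := by
    ext v y
    simp [perm_mul, perm_one]
  inv_mul_cancel g := by
    ext v y
    simp [perm_mul, perm_inv, perm_one, act_inv]

end TreeAut

/-- The rooted automorphism `a = (1,…,1)ε`, where `ε = (0 1 … p-1)` is the cyclic
rotation `x ↦ x + 1` of `Fin p`. -/
def rot (p : ℕ) [NeZero p] : TreeAut p :=
  ⟨fun v => if v = [] then Equiv.addRight (1 : Fin p) else 1⟩

/-- The components of a defining vector `v ∈ (ℤ/pℤ)^{p-1}`, read `p`-periodically: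
for `1 ≤ n ≤ p-1`, `vcomp v n` is the `n`-th component of `v` (and `vcomp v n = 0`
when `n ≡ 0 mod p`). -/
def vcomp {p : ℕ} [NeZero p] (v : Fin (p - 1) → ZMod p) (n : ℕ) : ZMod p :=
  if h : n % p = 0 then 0
  else v ⟨n % p - 1, by
    have h2 : n % p < p := Nat.mod_lt _ (Nat.pos_of_ne_zero (NeZero.ne p))
    omega⟩

/-- `N` is a quasinucleus with constant `k` for the self-similar group generated by the
symmetric set `S`: all sections at level `k` of products of two elements of `S ∪ N` lie in `N`. -/
def IsQuasiNucleusWith (p : ℕ) (S N : Set (TreeAut p)) (k : ℕ) : Prop :=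
  ∀ n₁ ∈ S ∪ N, ∀ n₂ ∈ S ∪ N, ∀ v : List (Fin p), v.length = k → (n₁ * n₂).sectV v ∈ N

/-- `N` is the nucleus of the group `G` with symmetric generating set `S`:
`N` is the inclusion-minimal finite subset of `G` that is a quasinucleus for some
level constant `k ≥ 1`. -/
def IsNucleusOf (p : ℕ) (S : Set (TreeAut p)) (G : Subgroup (TreeAut p)) (N : Set (TreeAut p)) : Prop :=
  (N ⊆ (G : Set (TreeAut p)) ∧ N.Finite ∧ ∃ k, 1 ≤ k ∧ IsQuasiNucleusWith p S N k) ∧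
  ∀ N' : Set (TreeAut p), N' ⊆ (G : Set (TreeAut p)) → N'.Finite →
    (∃ k, 1 ≤ k ∧ IsQuasiNucleusWith p S N' k) → N ⊆ N'
open Fin.NatCast in
/-- The defining wreath recursions of the generators `b, c` of the EGS-group defined
by a non-zero vector `e ∈ (ℤ/pℤ)^{p-1}` (Lean's `n : Fin (p-1)` is the paper's
`n = n.val + 1`): `b = (a^{e_1},…,a^{e_{p-1}},b)` and `c = (c,a^{e_1},…,a^{e_{p-1}})`,
i.e. `b` and `c` fix all first-level vertices, `b|_{n-1} = a^{e_n}`, `b|_{p-1} = b`,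
`c|_0 = c`, and `c|_n = a^{e_n}` for `1 ≤ n ≤ p-1`. -/
def IsEGSDatum (p : ℕ) [NeZero p]
    (e : Fin (p - 1) → ZMod p) (b c : TreeAut p) : Prop :=
  e ≠ 0 ∧
  (∀ x : Fin p, b.act [x] = [x]) ∧
  b.sect (((p - 1 : ℕ) : Fin p)) = b ∧
  (∀ n : Fin (p - 1), b.sect ((n.val : ℕ) : Fin p) = rot p ^ (e n).val) ∧
  (∀ x : Fin p, c.act [x] = [x]) ∧
  c.sect 0 = c ∧
  (∀ n : Fin (p - 1), c.sect ((n.val + 1 : ℕ) : Fin p) = rot p ^ (e n).val)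

/-- The EGS-group `G_e = ⟨a, b, c⟩`. -/
def EGSGroup (p : ℕ) [NeZero p] (b c : TreeAut p) : Subgroup (TreeAut p) :=
  Subgroup.closure {rot p, b, c}

theorem rot_mem_EGS (p : ℕ) [NeZero p] (b c : TreeAut p) : rot p ∈ EGSGroup p b c :=
  Subgroup.subset_closure (by simp)

theorem b_mem_EGS (p : ℕ) [NeZero p] (b c : TreeAut p) : b ∈ EGSGroup p b c :=
  Subgroup.subset_closure (by simp)

theorem c_mem_EGS (p : ℕ) [NeZero p] (b c : TreeAut p) : c ∈ EGSGroup p b c :=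
  Subgroup.subset_closure (by simp)

namespace TreeAut

variable {p : ℕ}

theorem ext_of_perm_nil_of_sect {g h : TreeAut p} (h₀ : g.perm [] = h.perm [])
    (hs : ∀ x, g.sect x = h.sect x) : g = h := by
  refine TreeAut.ext (funext fun v => ?_)
  cases v with
  | nil => exact h₀
  | cons x v => exact congrArg (fun k : TreeAut p => k.perm v) (hs x)

theorem perm_nil_mul (g h : TreeAut p) : (g * h).perm [] = (g.perm []).trans (h.perm []) :=
  rfl

theorem perm_nil_eq_one_of_act_singleton {g : TreeAut p} (hg : ∀ x, g.act [x] = [x]) :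
    g.perm [] = 1 :=
  Equiv.ext fun x => List.head_eq_of_cons_eq (hg x)

section PermNilEqOne

variable {g : TreeAut p} (hg : g.perm [] = 1)
include hg

theorem perm_nil_pow_eq_one (n : ℕ) : (g ^ n).perm [] = 1 := by
  induction n with
  | zero => rfl
  | succ n ih => rw [pow_succ, perm_nil_mul, ih, hg]; rfl

theorem perm_nil_eq_one_of_mem_powers {h : TreeAut p} (hh : h ∈ Submonoid.powers g) :
    h.perm [] = 1 := by
  obtain ⟨n, rfl⟩ := hh
  exact perm_nil_pow_eq_one hg n

theorem sect_mul_of_perm_nil_eq_one (h : TreeAut p) (x : Fin p) :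
    (g * h).sect x = g.sect x * h.sect x := by
  rw [sect_mul, hg]; rfl

theorem sect_pow_of_perm_nil_eq_one (x : Fin p) (n : ℕ) : (g ^ n).sect x = g.sect x ^ n := by
  induction n with
  | zero => rfl
  | succ n ih =>
    rw [pow_succ, sect_mul_of_perm_nil_eq_one (perm_nil_pow_eq_one hg n), ih, pow_succ]

theorem sect_mem_powers_sect {h : TreeAut p} (hh : h ∈ Submonoid.powers g) (x : Fin p) :
    h.sect x ∈ Submonoid.powers (g.sect x) := by
  obtain ⟨n, rfl⟩ := hh
  exact ⟨n, (sect_pow_of_perm_nil_eq_one hg x n).symm⟩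

theorem sect_eq_self_of_mem_powers {x : Fin p} (hx : g.sect x = g) {h : TreeAut p}
    (hh : h ∈ Submonoid.powers g) : h.sect x = h := by
  obtain ⟨n, rfl⟩ := hh
  rw [sect_pow_of_perm_nil_eq_one hg, hx]

theorem pow_eq_one_of_sect {n : ℕ} (hs : ∀ x, g.sect x = g ∨ g.sect x ^ n = 1) : g ^ n = 1 := by
  refine TreeAut.ext (funext fun v => ?_)
  induction v with
  | nil => exact perm_nil_pow_eq_one hg n
  | cons x v ih =>
    change ((g ^ n).sect x).perm v = 1
    rw [sect_pow_of_perm_nil_eq_one hg]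
    rcases hs x with hx | hx
    · rw [hx]; exact ih
    · rw [hx]; rfl

end PermNilEqOne

theorem sect_mul_mul_of_sect_eq_one {r r' : TreeAut p} (hr : ∀ y, r.sect y = 1)
    (hr' : ∀ y, r'.sect y = 1) (u : TreeAut p) (x : Fin p) :
    (r * u * r').sect x = u.sect (r.perm [] x) := by
  rw [sect_mul, sect_mul, hr, hr', one_mul, mul_one]

theorem sectV_singleton (g : TreeAut p) (x : Fin p) : g.sectV [x] = g.sect x :=
  rfl

theorem sectV_append (g : TreeAut p) (u v : List (Fin p)) :
    g.sectV (u ++ v) = (g.sectV u).sectV v := by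
  induction u generalizing g with
  | nil => rfl
  | cons x u ih => exact ih (g.sect x)

theorem sectV_replicate_of_sect_eq {g : TreeAut p} {x : Fin p} (hx : g.sect x = g) (k : ℕ) :
    g.sectV (List.replicate k x) = g := by
  induction k with
  | zero => rfl
  | succ k ih => rw [List.replicate_succ, sectV, hx, ih]

end TreeAut

theorem IsQuasiNucleusWith.sectV_mem {p k : ℕ} {S N : Set (TreeAut p)}
    (hN : IsQuasiNucleusWith p S N k) (h1 : 1 ∈ S) {g : TreeAut p} (hg : g ∈ S)
    {v : List (Fin p)} (hv : v.length = k) : g.sectV v ∈ N := by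
  simpa using hN g (Or.inl hg) 1 (Or.inl h1) v hv

open TreeAut Fin.NatCast Pointwise

section Rot

variable {p : ℕ} [NeZero p]

theorem rot_sect (x : Fin p) : (rot p).sect x = 1 :=
  TreeAut.ext (funext fun v => by simp [rot, sect, perm_one])

theorem sect_eq_one_of_mem_powers_rot {r : TreeAut p} (hr : r ∈ Submonoid.powers (rot p))
    (x : Fin p) : r.sect x = 1 := by
  obtain ⟨n, rfl⟩ := (Submonoid.mem_powers_iff _ _).mp hr
  clear hr
  induction n with
  | zero => rfl
  | succ n ih => rw [pow_succ, sect_mul, ih, rot_sect, one_mul]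

theorem rot_pow_perm_nil (n : ℕ) : (rot p ^ n).perm [] = Equiv.addRight (n : Fin p) := by
  induction n with
  | zero => ext x; simp [perm_one]
  | succ n ih =>
    rw [pow_succ, perm_nil_mul, ih]
    ext x
    simp [rot, add_assoc]

theorem rot_pow_self : rot p ^ p = 1 :=
  ext_of_perm_nil_of_sect (by rw [rot_pow_perm_nil]; ext x; simp [perm_one])
    fun x => sect_eq_one_of_mem_powers_rot ⟨p, rfl⟩ x

theorem pow_self_eq_one_of_mem_powers_rot {r : TreeAut p} (hr : r ∈ Submonoid.powers (rot p)) :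
    r ^ p = 1 := by
  obtain ⟨n, rfl⟩ := (Submonoid.mem_powers_iff _ _).mp hr
  rw [pow_right_comm, rot_pow_self, one_pow]

theorem orderOf_rot [Fact p.Prime] : orderOf (rot p) = p := by
  refine orderOf_eq_prime rot_pow_self fun h => ?_
  have hp1 : p = 1 := by simpa [rot, perm_one] using congrArg (fun g : TreeAut p => g.perm [] 0) h
  exact (Fact.out : p.Prime).one_lt.ne' hp1

theorem rot_pow_val_ne_one [Fact p.Prime] {z : ZMod p} (hz : z ≠ 0) : rot p ^ z.val ≠ 1 :=
  pow_ne_one_of_lt_orderOf ((ZMod.val_ne_zero z).mpr hz) (by rw [orderOf_rot]; exact ZMod.val_lt z)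

end Rot

section PowersOfFiniteOrder

variable {G : Type*} [Monoid G] {n : ℕ}

theorem image_pow_Icc_subset_powers (x : G) :
    (x ^ ·) '' Set.Icc 1 (n - 1) ⊆ Submonoid.powers x := by
  rintro _ ⟨i, -, rfl⟩
  exact ⟨i, rfl⟩

theorem one_notMem_image_pow_Icc {x : G} (hx : orderOf x = n) :
    (1 : G) ∉ (x ^ ·) '' Set.Icc 1 (n - 1) := by
  rintro ⟨i, ⟨hi1, hin⟩, hi⟩
  exact pow_ne_one_of_lt_orderOf (by omega) (by omega) hi

theorem ncard_image_pow_Icc {x : G} (hx : orderOf x = n) :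
    ((x ^ ·) '' Set.Icc 1 (n - 1)).ncard = n - 1 := by
  have hinj : Set.InjOn (x ^ ·) (Set.Icc 1 (n - 1)) :=
    pow_injOn_Iio_orderOf.mono fun i hi => by
      simp only [Set.mem_Icc, Set.mem_Iio] at hi ⊢
      omega
  rw [hinj.ncard_image, ← Finset.coe_Icc, Set.ncard_coe_finset, Nat.card_Icc]
  omega

theorem powers_eq_insert_one_image_pow_Icc {x : G} (hx : orderOf x = n) (hn : 0 < n) :
    (Submonoid.powers x : Set G) = insert 1 ((x ^ ·) '' Set.Icc 1 (n - 1)) := by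
  ext g
  constructor
  · intro hg
    obtain ⟨i, rfl⟩ := (Submonoid.mem_powers_iff _ _).mp hg
    rw [← pow_mod_orderOf, hx]
    rcases Nat.eq_zero_or_pos (i % n) with h | h
    · left
      rw [h, pow_zero]
    · exact Or.inr ⟨i % n, ⟨h, by have := Nat.mod_lt i hn; omega⟩, rfl⟩
  · rintro (rfl | hg)
    · exact one_mem _
    · exact image_pow_Icc_subset_powers x hg

theorem disjoint_image_pow_Icc {x y : G} (hx : orderOf x = n)
    (hxy : Disjoint (Submonoid.powers x) (Submonoid.powers y)) :
    Disjoint ((x ^ ·) '' Set.Icc 1 (n - 1)) ((y ^ ·) '' Set.Icc 1 (n - 1)) := by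
  refine Set.disjoint_left.mpr fun g hgx hgy => one_notMem_image_pow_Icc hx ?_
  rwa [← Submonoid.disjoint_def.mp hxy (image_pow_Icc_subset_powers x hgx)
    (image_pow_Icc_subset_powers y hgy)]

theorem setOf_eq_insert_one_union_image_pow_Icc (n : ℕ) (x y z : G) :
    {g : G | g = 1 ∨ (∃ i, 1 ≤ i ∧ i ≤ n - 1 ∧ g = x ^ i) ∨
        (∃ i, 1 ≤ i ∧ i ≤ n - 1 ∧ g = y ^ i) ∨ (∃ i, 1 ≤ i ∧ i ≤ n - 1 ∧ g = z ^ i)} =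
      insert 1 ((x ^ ·) '' Set.Icc 1 (n - 1) ∪ (y ^ ·) '' Set.Icc 1 (n - 1) ∪
        (z ^ ·) '' Set.Icc 1 (n - 1)) := by
  ext g
  simp only [Set.mem_ofPred_eq, Set.mem_insert_iff, Set.mem_union, Set.mem_image, Set.mem_Icc,
    and_assoc, or_assoc, eq_comm]

theorem ncard_insert_one_union_image_pow_Icc {x y z : G} (hn : 0 < n) (hx : orderOf x = n)
    (hy : orderOf y = n) (hz : orderOf z = n)
    (hxy : Disjoint (Submonoid.powers x) (Submonoid.powers y))
    (hxz : Disjoint (Submonoid.powers x) (Submonoid.powers z))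
    (hyz : Disjoint (Submonoid.powers y) (Submonoid.powers z)) :
    (insert 1 ((x ^ ·) '' Set.Icc 1 (n - 1) ∪ (y ^ ·) '' Set.Icc 1 (n - 1) ∪
        (z ^ ·) '' Set.Icc 1 (n - 1))).ncard = 3 * n - 2 := by
  rw [Set.ncard_insert_of_notMem, Set.ncard_union_eq, Set.ncard_union_eq, ncard_image_pow_Icc hx,
    ncard_image_pow_Icc hy, ncard_image_pow_Icc hz]
  · omega
  · exact disjoint_image_pow_Icc hx hxy
  · exact Set.disjoint_union_left.mpr
      ⟨disjoint_image_pow_Icc hx hxz, disjoint_image_pow_Icc hy hyz⟩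
  · simp only [Set.mem_union, not_or]
    exact ⟨⟨one_notMem_image_pow_Icc hx, one_notMem_image_pow_Icc hy⟩,
      one_notMem_image_pow_Icc hz⟩

end PowersOfFiniteOrder

theorem Fin.natCast_pred_ne_zero {p : ℕ} [NeZero p] (hp : 1 < p) : ((p - 1 : ℕ) : Fin p) ≠ 0 := by
  rw [Ne, Fin.natCast_eq_zero]
  exact Nat.not_dvd_of_pos_of_lt (by omega) (by omega)

def genPowers (p : ℕ) [NeZero p] (b c : TreeAut p) : Set (TreeAut p) :=
  (Submonoid.powers (rot p) : Set (TreeAut p)) ∪ Submonoid.powers b ∪ Submonoid.powers c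

section GenPowers

variable {p : ℕ} [NeZero p]

theorem one_mem_genPowers (b c : TreeAut p) : 1 ∈ genPowers p b c :=
  Or.inl (Or.inl (one_mem _))

theorem genPowers_subset_EGSGroup (b c : TreeAut p) :
    genPowers p b c ⊆ EGSGroup p b c := by
  rintro g ((hg | hg) | hg) <;> obtain ⟨i, rfl⟩ := (Submonoid.mem_powers_iff _ _).mp hg
  · exact pow_mem (rot_mem_EGS p b c) i
  · exact pow_mem (b_mem_EGS p b c) i
  · exact pow_mem (c_mem_EGS p b c) i

theorem mem_rot_mul_genPowers_mul_rot {b c u : TreeAut p} (hu : u ∈ genPowers p b c) :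
    u ∈ (Submonoid.powers (rot p) : Set (TreeAut p)) * genPowers p b c *
      (Submonoid.powers (rot p) : Set (TreeAut p)) :=
  mul_one u ▸ one_mul u ▸ Set.mul_mem_mul (Set.mul_mem_mul (one_mem _) hu) (one_mem _)

theorem mul_mem_rot_mul_genPowers_mul_rot {b c u v : TreeAut p} (hu : u ∈ genPowers p b c)
    (hv : v ∈ genPowers p b c)
    (h : u ∈ Submonoid.powers (rot p) ∨ v ∈ Submonoid.powers (rot p)) :
    u * v ∈ (Submonoid.powers (rot p) : Set (TreeAut p)) * genPowers p b c *
      (Submonoid.powers (rot p) : Set (TreeAut p)) := by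
  rcases h with hu' | hv'
  · exact mul_one (u * v) ▸ Set.mul_mem_mul (Set.mul_mem_mul hu' hv) (one_mem _)
  · exact one_mul u ▸ Set.mul_mem_mul (Set.mul_mem_mul (one_mem _) hu) hv'

end GenPowers

namespace IsEGSDatum

variable {p : ℕ} [NeZero p] {e : Fin (p - 1) → ZMod p} {b c : TreeAut p}
  (hd : IsEGSDatum p e b c)
include hd

theorem exists_ne_zero : ∃ n, e n ≠ 0 := Function.ne_iff.mp hd.1

theorem b_perm_nil : b.perm [] = 1 := perm_nil_eq_one_of_act_singleton hd.2.1

theorem b_sect_last : b.sect ((p - 1 : ℕ) : Fin p) = b := hd.2.2.1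

theorem b_sect_natCast (n : Fin (p - 1)) : b.sect ((n.val : ℕ) : Fin p) = rot p ^ (e n).val :=
  hd.2.2.2.1 n

theorem c_perm_nil : c.perm [] = 1 := perm_nil_eq_one_of_act_singleton hd.2.2.2.2.1

theorem c_sect_zero : c.sect 0 = c := hd.2.2.2.2.2.1

theorem c_sect_natCast_succ (n : Fin (p - 1)) :
    c.sect ((n.val + 1 : ℕ) : Fin p) = rot p ^ (e n).val :=
  hd.2.2.2.2.2.2 n

theorem sect_last_of_mem_powers_b {g : TreeAut p} (hg : g ∈ Submonoid.powers b) :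
    g.sect ((p - 1 : ℕ) : Fin p) = g :=
  sect_eq_self_of_mem_powers hd.b_perm_nil hd.b_sect_last hg

theorem sect_zero_of_mem_powers_c {g : TreeAut p} (hg : g ∈ Submonoid.powers c) :
    g.sect 0 = g :=
  sect_eq_self_of_mem_powers hd.c_perm_nil hd.c_sect_zero hg

theorem b_sect_mem_powers_rot {x : Fin p} (hx : x ≠ ((p - 1 : ℕ) : Fin p)) :
    b.sect x ∈ Submonoid.powers (rot p) := by
  have hlt : x.val < p - 1 := by
    have : x.val ≠ p - 1 := fun h => hx (by rw [← h, Fin.cast_val_eq_self])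
    omega
  have hb := hd.b_sect_natCast ⟨x.val, hlt⟩
  simp only [Fin.cast_val_eq_self] at hb
  exact hb ▸ pow_mem (Submonoid.mem_powers _) _

theorem c_sect_mem_powers_rot {x : Fin p} (hx : x ≠ 0) :
    c.sect x ∈ Submonoid.powers (rot p) := by
  have hpos : 0 < x.val := Fin.pos_iff_ne_zero.mpr hx
  have hc := hd.c_sect_natCast_succ ⟨x.val - 1, by omega⟩
  rw [Nat.sub_add_cancel hpos, Fin.cast_val_eq_self] at hc
  exact hc ▸ pow_mem (Submonoid.mem_powers _) _

theorem b_sect_eq_or_mem (x : Fin p) : b.sect x = b ∨ b.sect x ∈ Submonoid.powers (rot p) := by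
  by_cases hx : x = ((p - 1 : ℕ) : Fin p)
  · exact Or.inl (hx ▸ hd.b_sect_last)
  · exact Or.inr (hd.b_sect_mem_powers_rot hx)

theorem c_sect_eq_or_mem (x : Fin p) : c.sect x = c ∨ c.sect x ∈ Submonoid.powers (rot p) := by
  by_cases hx : x = 0
  · exact Or.inl (hx ▸ hd.c_sect_zero)
  · exact Or.inr (hd.c_sect_mem_powers_rot hx)

theorem sect_mem_powers_rot_of_mem_powers_b_c (hp : 1 < p) {g h : TreeAut p}
    (hg : g ∈ Submonoid.powers b) (hh : h ∈ Submonoid.powers c) (x : Fin p) :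
    g.sect x ∈ Submonoid.powers (rot p) ∨ h.sect x ∈ Submonoid.powers (rot p) := by
  by_cases hx : x = 0
  · refine Or.inl (Submonoid.powers_le.mpr (hd.b_sect_mem_powers_rot ?_)
      (sect_mem_powers_sect hd.b_perm_nil hg x))
    exact hx ▸ (Fin.natCast_pred_ne_zero hp).symm
  · exact Or.inr (Submonoid.powers_le.mpr (hd.c_sect_mem_powers_rot hx)
      (sect_mem_powers_sect hd.c_perm_nil hh x))

theorem b_pow_self : b ^ p = 1 :=
  pow_eq_one_of_sect hd.b_perm_nil fun x =>
    (hd.b_sect_eq_or_mem x).imp_right pow_self_eq_one_of_mem_powers_rot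

theorem c_pow_self : c ^ p = 1 :=
  pow_eq_one_of_sect hd.c_perm_nil fun x =>
    (hd.c_sect_eq_or_mem x).imp_right pow_self_eq_one_of_mem_powers_rot

theorem sect_mem_genPowers {g : TreeAut p} (hg : g ∈ genPowers p b c) (x : Fin p) :
    g.sect x ∈ genPowers p b c := by
  rcases hg with (hg | hg) | hg
  · rw [sect_eq_one_of_mem_powers_rot hg]
    exact one_mem_genPowers b c
  · have hgx := sect_mem_powers_sect hd.b_perm_nil hg x
    rcases hd.b_sect_eq_or_mem x with hbx | hbx
    · exact Or.inl (Or.inr (hbx ▸ hgx))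
    · exact Or.inl (Or.inl (Submonoid.powers_le.mpr hbx hgx))
  · have hgx := sect_mem_powers_sect hd.c_perm_nil hg x
    rcases hd.c_sect_eq_or_mem x with hcx | hcx
    · exact Or.inr (hcx ▸ hgx)
    · exact Or.inl (Or.inl (Submonoid.powers_le.mpr hcx hgx))

theorem sect_mem_genPowers_of_mem_rot_mul_mul_rot {w : TreeAut p}
    (hw : w ∈ (Submonoid.powers (rot p) : Set (TreeAut p)) * genPowers p b c *
      (Submonoid.powers (rot p) : Set (TreeAut p))) (x : Fin p) :
    w.sect x ∈ genPowers p b c := by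
  obtain ⟨_, ⟨r, hr, u, hu, rfl⟩, r', hr', rfl⟩ := hw
  rw [sect_mul_mul_of_sect_eq_one (sect_eq_one_of_mem_powers_rot hr)
    (sect_eq_one_of_mem_powers_rot hr')]
  exact hd.sect_mem_genPowers hu _

theorem sect_mul_mem_rot_mul_genPowers_mul_rot (hp : 1 < p) {g h : TreeAut p}
    (hg : g ∈ genPowers p b c) (hh : h ∈ genPowers p b c) (x : Fin p) :
    (g * h).sect x ∈ (Submonoid.powers (rot p) : Set (TreeAut p)) * genPowers p b c *
      (Submonoid.powers (rot p) : Set (TreeAut p)) := by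
  have of_mem_genPowers (hgh : g * h ∈ genPowers p b c) :=
    mem_rot_mul_genPowers_mul_rot (hd.sect_mem_genPowers hgh x)
  have of_mem_rot (hA : g ∈ Submonoid.powers (rot p) ∨ h ∈ Submonoid.powers (rot p)) :=
    mem_rot_mul_genPowers_mul_rot (hd.sect_mem_genPowers_of_mem_rot_mul_mul_rot
      (mul_mem_rot_mul_genPowers_mul_rot hg hh hA) x)
  rcases hg with (hgA | hgB) | hgC
  · exact of_mem_rot (Or.inl hgA)
  · rcases hh with (hhA | hhB) | hhC
    · exact of_mem_rot (Or.inr hhA)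
    · exact of_mem_genPowers (Or.inl (Or.inr (mul_mem hgB hhB)))
    · rw [sect_mul_of_perm_nil_eq_one (perm_nil_eq_one_of_mem_powers hd.b_perm_nil hgB)]
      exact mul_mem_rot_mul_genPowers_mul_rot (hd.sect_mem_genPowers (Or.inl (Or.inr hgB)) x)
        (hd.sect_mem_genPowers (Or.inr hhC) x)
        (hd.sect_mem_powers_rot_of_mem_powers_b_c hp hgB hhC x)
  · rcases hh with (hhA | hhB) | hhC
    · exact of_mem_rot (Or.inr hhA)
    · rw [sect_mul_of_perm_nil_eq_one (perm_nil_eq_one_of_mem_powers hd.c_perm_nil hgC)]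
      exact mul_mem_rot_mul_genPowers_mul_rot (hd.sect_mem_genPowers (Or.inr hgC) x)
        (hd.sect_mem_genPowers (Or.inl (Or.inr hhB)) x)
        (hd.sect_mem_powers_rot_of_mem_powers_b_c hp hhB hgC x).symm
    · exact of_mem_genPowers (Or.inr (mul_mem hgC hhC))

theorem isQuasiNucleusWith_genPowers (hp : 1 < p) :
    IsQuasiNucleusWith p (genPowers p b c) (genPowers p b c) 2 := by
  intro g hg h hh v hv
  rw [Set.union_self] at hg hh
  obtain ⟨x, y, rfl⟩ := List.length_eq_two.mp hv
  exact hd.sect_mem_genPowers_of_mem_rot_mul_mul_rot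
    (hd.sect_mul_mem_rot_mul_genPowers_mul_rot hp hg hh x) y

theorem disjoint_powers_rot_b : Disjoint (Submonoid.powers (rot p)) (Submonoid.powers b) :=
  Submonoid.disjoint_def.mpr fun hA hB =>
    (hd.sect_last_of_mem_powers_b hB).symm.trans (sect_eq_one_of_mem_powers_rot hA _)

theorem disjoint_powers_rot_c : Disjoint (Submonoid.powers (rot p)) (Submonoid.powers c) :=
  Submonoid.disjoint_def.mpr fun hA hC =>
    (hd.sect_zero_of_mem_powers_c hC).symm.trans (sect_eq_one_of_mem_powers_rot hA _)

theorem disjoint_powers_b_c (hp : 1 < p) : Disjoint (Submonoid.powers b) (Submonoid.powers c) := by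
  refine Submonoid.disjoint_def.mpr fun {g} hB hC => Submonoid.disjoint_def.mp
    hd.disjoint_powers_rot_b ?_ hB
  rw [← hd.sect_last_of_mem_powers_b hB]
  exact Submonoid.powers_le.mpr (hd.c_sect_mem_powers_rot (Fin.natCast_pred_ne_zero hp))
    (sect_mem_powers_sect hd.c_perm_nil hC _)

variable [Fact p.Prime]

theorem orderOf_b : orderOf b = p := by
  refine orderOf_eq_prime hd.b_pow_self fun hb => ?_
  obtain ⟨n, hn⟩ := hd.exists_ne_zero
  apply rot_pow_val_ne_one hn
  rw [← hd.b_sect_natCast n, hb]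
  rfl

theorem orderOf_c : orderOf c = p := by
  refine orderOf_eq_prime hd.c_pow_self fun hc => ?_
  obtain ⟨n, hn⟩ := hd.exists_ne_zero
  apply rot_pow_val_ne_one hn
  rw [← hd.c_sect_natCast_succ n, hc]
  rfl

theorem exists_b_pow_sect_eq_rot : ∃ (x : Fin p) (j : ℕ), (b ^ j).sect x = rot p := by
  obtain ⟨n, hn⟩ := hd.exists_ne_zero
  have hcop : (e n).val.Coprime (orderOf (rot p)) := by
    rw [orderOf_rot, Nat.coprime_comm, Nat.Prime.coprime_iff_not_dvd Fact.out]
    exact Nat.not_dvd_of_pos_of_lt (Nat.pos_of_ne_zero ((ZMod.val_ne_zero _).mpr hn))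
      (ZMod.val_lt _)
  obtain ⟨j, hj⟩ := exists_pow_eq_self_of_coprime hcop
  exact ⟨_, j, by rw [sect_pow_of_perm_nil_eq_one hd.b_perm_nil, hd.b_sect_natCast n, hj]⟩

theorem exists_sectV_eq {g : TreeAut p} (hg : g ∈ genPowers p b c) {k : ℕ} (hk : 1 ≤ k) :
    ∃ h ∈ genPowers p b c, ∃ v : List (Fin p), v.length = k ∧ h.sectV v = g := by
  rcases hg with (hgA | hgB) | hgC
  · obtain ⟨i, rfl⟩ := (Submonoid.mem_powers_iff _ _).mp hgA
    obtain ⟨x, j, hj⟩ := hd.exists_b_pow_sect_eq_rot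
    refine ⟨b ^ (j * i), Or.inl (Or.inr (pow_mem (Submonoid.mem_powers _) _)),
      List.replicate (k - 1) ((p - 1 : ℕ) : Fin p) ++ [x], by simp; omega, ?_⟩
    rw [sectV_append,
      sectV_replicate_of_sect_eq (hd.sect_last_of_mem_powers_b (pow_mem (Submonoid.mem_powers _) _)),
      sectV_singleton, pow_mul, sect_pow_of_perm_nil_eq_one (perm_nil_pow_eq_one hd.b_perm_nil j),
      hj]
  · exact ⟨g, Or.inl (Or.inr hgB), _, List.length_replicate,
      sectV_replicate_of_sect_eq (hd.sect_last_of_mem_powers_b hgB) k⟩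
  · exact ⟨g, Or.inr hgC, _, List.length_replicate,
      sectV_replicate_of_sect_eq (hd.sect_zero_of_mem_powers_c hgC) k⟩

theorem genPowers_subset_of_isQuasiNucleusWith {N : Set (TreeAut p)} {k : ℕ} (hk : 1 ≤ k)
    (hN : IsQuasiNucleusWith p (genPowers p b c) N k) : genPowers p b c ⊆ N := by
  intro g hg
  obtain ⟨h, hh, v, hv, rfl⟩ := hd.exists_sectV_eq hg hk
  exact hN.sectV_mem (one_mem_genPowers b c) hh hv

theorem genPowers_eq :
    genPowers p b c = insert 1 ((rot p ^ ·) '' Set.Icc 1 (p - 1) ∪ (b ^ ·) '' Set.Icc 1 (p - 1) ∪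
      (c ^ ·) '' Set.Icc 1 (p - 1)) := by
  have hp : 0 < p := (Fact.out : p.Prime).pos
  rw [genPowers, powers_eq_insert_one_image_pow_Icc orderOf_rot hp,
    powers_eq_insert_one_image_pow_Icc hd.orderOf_b hp,
    powers_eq_insert_one_image_pow_Icc hd.orderOf_c hp]
  simp only [Set.insert_union, Set.union_insert, Set.insert_idem]

theorem isNucleusOf_genPowers :
    IsNucleusOf p (genPowers p b c) (EGSGroup p b c) (genPowers p b c) :=
  ⟨⟨genPowers_subset_EGSGroup b c, hd.genPowers_eq ▸ Set.toFinite _, 2, one_le_two,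
      hd.isQuasiNucleusWith_genPowers (Fact.out : p.Prime).one_lt⟩,
    fun _ _ _ ⟨_, hk, hN⟩ => hd.genPowers_subset_of_isQuasiNucleusWith hk hN⟩

theorem ncard_genPowers : (genPowers p b c).ncard = 3 * p - 2 := by
  rw [hd.genPowers_eq]
  exact ncard_insert_one_union_image_pow_Icc (Fact.out : p.Prime).pos orderOf_rot hd.orderOf_b
    hd.orderOf_c hd.disjoint_powers_rot_b hd.disjoint_powers_rot_c
    (hd.disjoint_powers_b_c (Fact.out : p.Prime).one_lt)

end IsEGSDatum

theorem EGS_contracting_nucleus_general (p : ℕ) [Fact p.Prime] [NeZero p]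
    (e : Fin (p - 1) → ZMod p) (b c : TreeAut p)
    (hdatum : IsEGSDatum p e b c) :
    IsNucleusOf p
      {g | g = 1 ∨ (∃ i, 1 ≤ i ∧ i ≤ p - 1 ∧ g = rot p ^ i) ∨
        (∃ i, 1 ≤ i ∧ i ≤ p - 1 ∧ g = b ^ i) ∨ (∃ i, 1 ≤ i ∧ i ≤ p - 1 ∧ g = c ^ i)}
      (EGSGroup p b c)
      {g | g = 1 ∨ (∃ i, 1 ≤ i ∧ i ≤ p - 1 ∧ g = rot p ^ i) ∨
        (∃ i, 1 ≤ i ∧ i ≤ p - 1 ∧ g = b ^ i) ∨ (∃ i, 1 ≤ i ∧ i ≤ p - 1 ∧ g = c ^ i)} ∧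
    ({g : TreeAut p | g = 1 ∨ (∃ i, 1 ≤ i ∧ i ≤ p - 1 ∧ g = rot p ^ i) ∨
        (∃ i, 1 ≤ i ∧ i ≤ p - 1 ∧ g = b ^ i) ∨
        (∃ i, 1 ≤ i ∧ i ≤ p - 1 ∧ g = c ^ i)}).ncard = 3 * p - 2 := by
  rw [setOf_eq_insert_one_union_image_pow_Icc, ← hdatum.genPowers_eq]
  exact ⟨hdatum.isNucleusOf_genPowers, hdatum.ncard_genPowers⟩

/-- **Contracting property and nucleus of EGS-groups.** For a prime `p ≥ 3`, the
EGS-group `G_e = ⟨a, b, c⟩` defined by a non-zero vector `e ∈ (ℤ/pℤ)^{p-1}` is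
contracting with nucleus
`N_e = {1} ∪ {a^i : 1 ≤ i ≤ p-1} ∪ {b^j : 1 ≤ j ≤ p-1} ∪ {c^k : 1 ≤ k ≤ p-1}`,
and `|N_e| = 3p - 2`. -/
theorem EGS_contracting_nucleus (p : ℕ) [Fact p.Prime] [NeZero p] (hp3 : 3 ≤ p)
    (e : Fin (p - 1) → ZMod p) (b c : TreeAut p)
    (hdatum : IsEGSDatum p e b c) :
    IsNucleusOf p
      {g | g = 1 ∨ (∃ i, 1 ≤ i ∧ i ≤ p - 1 ∧ g = rot p ^ i) ∨
        (∃ i, 1 ≤ i ∧ i ≤ p - 1 ∧ g = b ^ i) ∨ (∃ i, 1 ≤ i ∧ i ≤ p - 1 ∧ g = c ^ i)}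
      (EGSGroup p b c)
      {g | g = 1 ∨ (∃ i, 1 ≤ i ∧ i ≤ p - 1 ∧ g = rot p ^ i) ∨
        (∃ i, 1 ≤ i ∧ i ≤ p - 1 ∧ g = b ^ i) ∨ (∃ i, 1 ≤ i ∧ i ≤ p - 1 ∧ g = c ^ i)} ∧
    ({g : TreeAut p | g = 1 ∨ (∃ i, 1 ≤ i ∧ i ≤ p - 1 ∧ g = rot p ^ i) ∨
        (∃ i, 1 ≤ i ∧ i ≤ p - 1 ∧ g = b ^ i) ∨
        (∃ i, 1 ≤ i ∧ i ≤ p - 1 ∧ g = c ^ i)}).ncard = 3 * p - 2 :=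
  EGS_contracting_nucleus_general p e b c hdatum
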